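/- arXiv:math/0105215 — 2 statements merged into one kernel-verified Lean document; each statement's English description precedes it below -/
import Mathlib

section
/- Let X and Y be independent where X is uniform on [0,h] (h>1) and Y satisfies P(Y ≤ ξ) = (h(ξ-1))/(ξ(h-1)) for ξ ∈ [1,h] (the law of 1 + M̄ where M̄ is the maximum of Brownian motion started at 0, killed at hitting -1, conditioned not to hit h-1). Then max(X,Y) is uniformly distributed on [1,h]. -/
open MeasureTheory ProbabilityTheory

/-- If `X ~ U[0,h]` and, independently, `Y ∈ [1,h]` has CDF
`P(Y ≤ ξ) = h(ξ-1)/(ξ(h-1))` on `[1,h]`, then `max(X,Y)` is uniform on `[1,h]`. -/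
theorem max_uniform
    {Ω : Type} [MeasureSpace Ω] [IsProbabilityMeasure (ℙ : Measure Ω)]
    (h : ℝ) (hh : 1 < h)
    (X Y : Ω → ℝ) (hXm : Measurable X) (hYm : Measurable Y)
    (hindep : IndepFun X Y)
    (hX : Measure.map X ℙ = (ENNReal.ofReal h)⁻¹ • volume.restrict (Set.Icc (0 : ℝ) h))
    (hYrange : ∀ᵐ ω ∂ℙ, Y ω ∈ Set.Icc (1 : ℝ) h)
    (hY : ∀ ξ : ℝ, 1 ≤ ξ → ξ ≤ h →
      ℙ {ω | Y ω ≤ ξ} = ENNReal.ofReal (h * (ξ - 1) / (ξ * (h - 1)))) :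
    ∀ u : ℝ, 1 ≤ u → u ≤ h →
      ℙ {ω | max (X ω) (Y ω) ≤ u} = ENNReal.ofReal ((u - 1) / (h - 1)) := by
  intro u hu1 huh
  have hu0 : (0:ℝ) < u := lt_of_lt_of_le one_pos hu1
  have hh0 : (0:ℝ) < h := lt_trans one_pos hh
  have hset : {ω | max (X ω) (Y ω) ≤ u}
      = X ⁻¹' Set.Iic u ∩ Y ⁻¹' Set.Iic u := by
    ext ω; simp [max_le_iff, Set.mem_setOf_eq]
  have hmul := hindep.measure_inter_preimage_eq_mul (Set.Iic u) (Set.Iic u)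
    measurableSet_Iic measurableSet_Iic
  have hXu : ℙ (X ⁻¹' Set.Iic u) = ENNReal.ofReal (u / h) := by
    have : ℙ (X ⁻¹' Set.Iic u) = Measure.map X ℙ (Set.Iic u) := by
      rw [Measure.map_apply hXm measurableSet_Iic]
    rw [this, hX]
    simp only [Measure.smul_apply, Measure.restrict_apply measurableSet_Iic,
      smul_eq_mul]
    have hinter : Set.Iic u ∩ Set.Icc (0:ℝ) h = Set.Icc 0 u := by
      ext x; constructor
      · rintro ⟨hx1, hx2, _⟩; exact ⟨hx2, hx1⟩
      · rintro ⟨hx1, hx2⟩; exact ⟨hx2, hx1, le_trans hx2 huh⟩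
    rw [hinter, Real.volume_Icc, sub_zero,
      ← ENNReal.ofReal_inv_of_pos hh0, ← ENNReal.ofReal_mul (by positivity)]
    rw [div_eq_inv_mul]
  have hYu : ℙ (Y ⁻¹' Set.Iic u) = ENNReal.ofReal (h * (u - 1) / (u * (h - 1))) :=
    hY u hu1 huh
  rw [hset, hmul, hXu, hYu, ← ENNReal.ofReal_mul (by positivity)]
  congr 1
  have hh1 : h - 1 ≠ 0 := by linarith
  field_simp
end

section
/- Let h ≥ t > 1. For s > 1 let F_s(z,w) = z·e^{-(z+s-w-1)} be the joint CDF of a measure on A_s = {0≤z≤1, z ≤ w ≤ z+s-1}, and let (H₊(1),H₊(h)) ~ F_h and (H₋(1),H₋(t)) ~ F_t be independent. Then Q(t) := P(H₊(1) < H₋(1), H₊(h) < H₋(t)) equals (5/12)e^{-(h-t)} + (1/12)e^{-(h+t-2)}. -/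
open MeasureTheory ProbabilityTheory

open Real Set Filter Topology
open scoped ENNReal

noncomputable def agMfun (t b : ℝ) : ℝ :=
  if b ≤ 0 then 0 else if b ≤ 1 then b * Real.exp (1 - t) else Real.exp (b - t)

noncomputable def agCfun (t a b : ℝ) : ℝ :=
  if b ≤ 0 then 0 else if b ≤ a then b * Real.exp (1 - t)
  else if b ≤ a + t - 1 then a * Real.exp (b - a + 1 - t) else a


theorem ag_M_nonneg (t b : ℝ) : 0 ≤ agMfun t b := by
  rw [agMfun]
  split_ifs with h1 h2
  · exact le_rfl
  · exact mul_nonneg (not_le.mp h1).le (Real.exp_pos _).le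
  · exact (Real.exp_pos _).le

theorem ag_C_nonneg (t a b : ℝ) (ha : 0 ≤ a) : 0 ≤ agCfun t a b := by
  rw [agCfun]
  split_ifs with h1 h2 h3
  · exact le_rfl
  · exact mul_nonneg (not_le.mp h1).le (Real.exp_pos _).le
  · exact mul_nonneg ha (Real.exp_pos _).le
  · exact ha

section nuFacts

variable {ν : Measure (ℝ × ℝ)} [IsProbabilityMeasure ν] {t : ℝ}

variable (hsupp : ∀ᵐ q ∂ν, 0 ≤ q.1 ∧ q.1 ≤ 1 ∧ q.1 ≤ q.2 ∧ q.2 ≤ q.1 + t - 1)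
variable (hcdf : ∀ z w : ℝ, 0 ≤ z → z ≤ 1 → z ≤ w → w ≤ z + t - 1 →
      ν {q | q.1 ≤ z ∧ q.2 ≤ w} = ENNReal.ofReal (z * Real.exp (-(z + t - w - 1))))

include hsupp hcdf

theorem ag_marg1 (ht : 1 ≤ t) {a : ℝ} (ha0 : 0 ≤ a) (ha1 : a ≤ 1) :
    ν {q | q.1 ≤ a} = ENNReal.ofReal a := by
  have h1 : ν {q | q.1 ≤ a} = ν {q | q.1 ≤ a ∧ q.2 ≤ a + t - 1} := by
    apply measure_congr
    rw [eventuallyEq_set]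
    filter_upwards [hsupp] with q hq
    constructor
    · rintro h1; exact ⟨h1, le_trans hq.2.2.2 (by linarith)⟩
    · rintro ⟨h1, _⟩; exact h1
  rw [h1, hcdf a (a + t - 1) ha0 ha1 (by linarith) (by linarith)]
  rw [show -(a + t - (a + t - 1) - 1) = (0:ℝ) by ring, Real.exp_zero, mul_one]

theorem ag_marg2 (ht : 1 ≤ t) {b : ℝ} (hb : b ≤ t) :
    ν {q | q.2 ≤ b} = ENNReal.ofReal (agMfun t b) := by
  rcases le_or_gt b 0 with hb0 | hb0
  · rw [agMfun, if_pos hb0]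
    simp only [ENNReal.ofReal_zero]
    have hle : ν {q | q.2 ≤ b} ≤ ν {q : ℝ × ℝ | q.1 ≤ 0 ∧ q.2 ≤ 0} := by
      apply measure_mono_ae
      filter_upwards [hsupp] with q hq hqb
      exact ⟨le_trans hq.2.2.1 (le_trans hqb hb0), le_trans hqb hb0⟩
    rw [hcdf 0 0 le_rfl (by norm_num) le_rfl (by linarith)] at hle
    simpa using hle
  rcases le_or_gt b 1 with hb1 | hb1
  · rw [agMfun, if_neg (by linarith), if_pos hb1]
    have h1 : ν {q | q.2 ≤ b} = ν {q | q.1 ≤ b ∧ q.2 ≤ b} := by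
      apply measure_congr
      rw [eventuallyEq_set]
      filter_upwards [hsupp] with q hq
      exact ⟨fun h => ⟨le_trans hq.2.2.1 h, h⟩, fun h => h.2⟩
    rw [h1, hcdf b b hb0.le hb1 le_rfl (by linarith)]
    rw [show -(b + t - b - 1) = 1 - t by ring]
  · rw [agMfun, if_neg (by linarith), if_neg (by linarith)]
    have h1 : ν {q | q.2 ≤ b} = ν {q | q.1 ≤ 1 ∧ q.2 ≤ b} := by
      apply measure_congr
      rw [eventuallyEq_set]
      filter_upwards [hsupp] with q hq
      exact ⟨fun h => ⟨hq.2.1, h⟩, fun h => h.2⟩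
    rw [h1, hcdf 1 b (by norm_num) le_rfl hb1.le (by linarith)]
    rw [show -(1 + t - b - 1) = b - t by ring, one_mul]

theorem ag_joint (ht : 1 ≤ t) {a b : ℝ} (ha0 : 0 ≤ a) (ha1 : a ≤ 1) :
    ν {q | q.1 ≤ a ∧ q.2 ≤ b} = ENNReal.ofReal (agCfun t a b) := by
  rcases le_or_gt b 0 with hb0 | hb0
  · rw [agCfun, if_pos hb0]
    simp only [ENNReal.ofReal_zero]
    have hle : ν {q : ℝ × ℝ | q.1 ≤ a ∧ q.2 ≤ b} ≤ ν {q : ℝ × ℝ | q.1 ≤ 0 ∧ q.2 ≤ 0} := by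
      apply measure_mono_ae
      filter_upwards [hsupp] with q hq hqb
      exact ⟨le_trans hq.2.2.1 (le_trans hqb.2 hb0), le_trans hqb.2 hb0⟩
    rw [hcdf 0 0 le_rfl (by norm_num) le_rfl (by linarith)] at hle
    simpa using hle
  rcases le_or_gt b a with hba | hba
  · rw [agCfun, if_neg (by linarith), if_pos hba]
    have h1 : ν {q | q.1 ≤ a ∧ q.2 ≤ b} = ν {q | q.1 ≤ b ∧ q.2 ≤ b} := by
      apply measure_congr
      rw [eventuallyEq_set]
      filter_upwards [hsupp] with q hq
      exact ⟨fun h => ⟨le_trans hq.2.2.1 h.2, h.2⟩, fun h => ⟨le_trans h.1 hba, h.2⟩⟩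
    rw [h1, hcdf b b hb0.le (le_trans hba ha1) le_rfl (by linarith)]
    rw [show -(b + t - b - 1) = 1 - t by ring]
  rcases le_or_gt b (a + t - 1) with hbt | hbt
  · rw [agCfun, if_neg (by linarith), if_neg (by linarith), if_pos hbt]
    rw [hcdf a b ha0 ha1 hba.le hbt]
    rw [show -(a + t - b - 1) = b - a + 1 - t by ring]
  · rw [agCfun, if_neg (by linarith), if_neg (by linarith), if_neg (by linarith)]
    have h1 : ν {q | q.1 ≤ a ∧ q.2 ≤ b} = ν {q | q.1 ≤ a ∧ q.2 ≤ a + t - 1} := by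
      apply measure_congr
      rw [eventuallyEq_set]
      filter_upwards [hsupp] with q hq
      constructor
      · rintro ⟨h1, _⟩; exact ⟨h1, le_trans hq.2.2.2 (by linarith)⟩
      · rintro ⟨h1, h2⟩; exact ⟨h1, le_trans h2 (by linarith)⟩
    rw [h1, hcdf a (a + t - 1) ha0 ha1 (by linarith) le_rfl]
    rw [show -(a + t - (a + t - 1) - 1) = (0:ℝ) by ring, Real.exp_zero, mul_one]


theorem ag_quadrant (ht : 1 ≤ t) {a b : ℝ} (ha0 : 0 ≤ a) (ha1 : a ≤ 1) (hb : b ≤ t) :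
    ν {q | a < q.1 ∧ b < q.2}
      = ENNReal.ofReal (1 - (a + agMfun t b - agCfun t a b)) ∧
      0 ≤ 1 - (a + agMfun t b - agCfun t a b) := by
  set M := agMfun t b with hM
  set C := agCfun t a b with hC
  have hMneas : MeasurableSet {q : ℝ × ℝ | q.1 ≤ a} :=
    measurableSet_le measurable_fst measurable_const
  have hNneas : MeasurableSet {q : ℝ × ℝ | q.2 ≤ b} :=
    measurableSet_le measurable_snd measurable_const
  have hkey : ν ({q : ℝ × ℝ | q.1 ≤ a} ∪ {q : ℝ × ℝ | q.2 ≤ b}) + ENNReal.ofReal C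
      = ENNReal.ofReal a + ENNReal.ofReal M := by
    have := measure_union_add_inter (μ := ν) {q : ℝ × ℝ | q.1 ≤ a} hNneas
    have hint : ({q : ℝ × ℝ | q.1 ≤ a} ∩ {q : ℝ × ℝ | q.2 ≤ b})
        = {q : ℝ × ℝ | q.1 ≤ a ∧ q.2 ≤ b} := rfl
    rw [hint, ag_joint hsupp hcdf ht ha0 ha1, ag_marg1 hsupp hcdf ht ha0 ha1,
      ag_marg2 hsupp hcdf ht hb] at this
    exact this
  have hfin : ν ({q : ℝ × ℝ | q.1 ≤ a} ∪ {q : ℝ × ℝ | q.2 ≤ b}) ≠ ⊤ :=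
    (measure_lt_top ν _).ne
  have hD : (ν ({q : ℝ × ℝ | q.1 ≤ a} ∪ {q : ℝ × ℝ | q.2 ≤ b})).toReal = a + M - C := by
    have := congrArg ENNReal.toReal hkey
    rw [ENNReal.toReal_add hfin ENNReal.ofReal_ne_top,
      ENNReal.toReal_add ENNReal.ofReal_ne_top ENNReal.ofReal_ne_top,
      ENNReal.toReal_ofReal (ag_C_nonneg t a b ha0), ENNReal.toReal_ofReal ha0,
      ENNReal.toReal_ofReal (ag_M_nonneg t b)] at this
    linarith
  have hD0 : 0 ≤ a + M - C := hD ▸ ENNReal.toReal_nonneg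
  have hD1 : a + M - C ≤ 1 := by
    rw [← hD]
    exact ENNReal.toReal_le_of_le_ofReal zero_le_one (by simpa using prob_le_one)
  have hcomp : {q : ℝ × ℝ | a < q.1 ∧ b < q.2}
      = ({q : ℝ × ℝ | q.1 ≤ a} ∪ {q : ℝ × ℝ | q.2 ≤ b})ᶜ := by
    ext q
    simp [not_or, not_le]
  refine ⟨?_, by linarith⟩
  rw [hcomp, prob_compl_eq_one_sub (hMneas.union hNneas)]
  have hval : ν ({q : ℝ × ℝ | q.1 ≤ a} ∪ {q : ℝ × ℝ | q.2 ≤ b})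
      = ENNReal.ofReal (a + M - C) := by
    rw [← hD, ENNReal.ofReal_toReal hfin]
  rw [hval, ENNReal.ofReal_sub 1 hD0, ENNReal.ofReal_one]

end nuFacts

section muFacts

variable {μ : Measure (ℝ × ℝ)} [IsProbabilityMeasure μ] {h : ℝ}

theorem ag_quadrant_lt
    (hsupp : ∀ᵐ p ∂μ, 0 ≤ p.1 ∧ p.1 ≤ 1 ∧ p.1 ≤ p.2 ∧ p.2 ≤ p.1 + h - 1)
    (hcdf : ∀ z w : ℝ, 0 ≤ z → z ≤ 1 → z ≤ w → w ≤ z + h - 1 →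
      μ {p | p.1 ≤ z ∧ p.2 ≤ w} = ENNReal.ofReal (z * Real.exp (-(z + h - w - 1))))
    {a b : ℝ} (ha0 : 0 ≤ a) (ha1 : a ≤ 1) (hab : a ≤ b) (hbh : b ≤ a + h - 1) :
    μ {p | p.1 < a ∧ p.2 < b} = ENNReal.ofReal (a * Real.exp (-(a + h - b - 1))) := by
  rcases eq_or_lt_of_le ha0 with rfl | ha
  · have h0 : μ {p : ℝ × ℝ | p.1 < 0 ∧ p.2 < b} = 0 := by
      rw [← nonpos_iff_eq_zero]
      refine le_trans (measure_mono_ae ?_) (le_of_eq (measure_empty (μ := μ)))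
      filter_upwards [hsupp] with p hp
      intro hmem
      exact absurd hp.1 (not_le.mpr hmem.1)
    rw [h0, zero_mul, ENNReal.ofReal_zero]
  · set E : ℕ → Set (ℝ × ℝ) := fun n => {p | p.1 ≤ a - a / (n + 1) ∧ p.2 ≤ b - a / (n + 1)}
      with hE
    have hmono : Monotone E := by
      intro n m hnm p hp
      have hcast : (n : ℝ) + 1 ≤ (m : ℝ) + 1 := by exact_mod_cast Nat.succ_le_succ hnm
      have hdiv : a / ((m : ℝ) + 1) ≤ a / ((n : ℝ) + 1) :=
        div_le_div_of_nonneg_left ha.le (by positivity) hcast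
      simp only [hE, mem_setOf_eq] at hp ⊢
      exact ⟨le_trans hp.1 (by linarith), le_trans hp.2 (by linarith)⟩
    have hunion : (⋃ n, E n) = {p : ℝ × ℝ | p.1 < a ∧ p.2 < b} := by
      ext p
      simp only [mem_iUnion, hE, mem_setOf_eq]
      constructor
      · rintro ⟨n, h1, h2⟩
        have : 0 < a / (n + 1) := by positivity
        exact ⟨lt_of_le_of_lt h1 (by linarith), lt_of_le_of_lt h2 (by linarith)⟩
      · rintro ⟨h1, h2⟩
        set ε := min (a - p.1) (b - p.2) with hε
        have hε0 : 0 < ε := lt_min (by linarith) (by linarith)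
        obtain ⟨n, hn⟩ := exists_nat_gt (a / ε)
        refine ⟨n, ?_, ?_⟩
        · have hle : a / (n + 1) ≤ ε := by
            rw [div_le_iff₀ (by positivity)]
            have : a / ε < n + 1 := lt_of_lt_of_le hn (by push_cast; linarith)
            calc a = (a / ε) * ε := by field_simp
            _ ≤ (n + 1) * ε := by nlinarith
            _ = ε * (n + 1) := by ring
          have : ε ≤ a - p.1 := min_le_left _ _
          linarith
        · have hle : a / (n + 1) ≤ ε := by
            rw [div_le_iff₀ (by positivity)]
            have : a / ε < n + 1 := lt_of_lt_of_le hn (by push_cast; linarith)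
            calc a = (a / ε) * ε := by field_simp
            _ ≤ (n + 1) * ε := by nlinarith
            _ = ε * (n + 1) := by ring
          have : ε ≤ b - p.2 := min_le_right _ _
          linarith
    have hlim := tendsto_measure_iUnion_atTop (μ := μ) hmono
    rw [hunion] at hlim
    have hval : ∀ n : ℕ, μ (E n)
        = ENNReal.ofReal ((a - a / (n + 1)) * Real.exp (-(a + h - b - 1))) := by
      intro n
      have hd0 : 0 < a / (n + 1) := by positivity
      have hdle : a / (n + 1) ≤ a := by
        apply div_le_self ha.le
        have : (0:ℝ) ≤ n := Nat.cast_nonneg n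
        linarith
      have := hcdf (a - a / (n + 1)) (b - a / (n + 1)) (by linarith) (by linarith)
        (by linarith) (by linarith)
      rw [hE]
      rw [this, show -(a - a / (n + 1) + h - (b - a / (n + 1)) - 1) = -(a + h - b - 1) by ring]
    have hlim2 : Tendsto (fun n => μ (E n)) atTop
        (𝓝 (ENNReal.ofReal (a * Real.exp (-(a + h - b - 1))))) := by
      simp only [hval]
      apply ENNReal.tendsto_ofReal
      have h1 : Tendsto (fun n : ℕ => a / (n + 1)) atTop (𝓝 0) := by
        have := tendsto_const_div_atTop_nhds_zero_nat a
        have h2 := this.comp (tendsto_add_atTop_nat 1)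
        have : ((fun n : ℕ => a / (n:ℝ)) ∘ fun n : ℕ => n + 1) = fun n : ℕ => a / ((n:ℝ) + 1) := by
          funext n; simp [Function.comp]
        rwa [this] at h2
      have h2 : Tendsto (fun n : ℕ => a - a / (n + 1)) atTop (𝓝 a) := by
        simpa using (tendsto_const_nhds (x := a)).sub h1
      simpa using h2.mul_const _
    exact tendsto_nhds_unique hlim hlim2

end muFacts

section realInts

lemma ag_ioc_exp {x y : ℝ} (hxy : x ≤ y) : ∫ b in Ioc x y, Real.exp b = exp y - exp x := by
  rw [← intervalIntegral.integral_of_le hxy, integral_exp]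

lemma ag_ioc_bexp {x y : ℝ} (hxy : x ≤ y) :
    ∫ b in Ioc x y, b * Real.exp b = (y - 1) * exp y - (x - 1) * exp x := by
  rw [← intervalIntegral.integral_of_le hxy]
  apply intervalIntegral.integral_eq_sub_of_hasDerivAt
  · intro z _
    have h1 : HasDerivAt (fun b : ℝ => (b - 1) * Real.exp b)
        (1 * Real.exp z + (z - 1) * Real.exp z) z :=
      ((hasDerivAt_id z).sub_const 1).mul (Real.hasDerivAt_exp z)
    refine h1.congr_deriv ?_
    ring
  · exact (continuous_id.mul continuous_exp).intervalIntegrable x y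

lemma ag_ioc_exp2 {x y : ℝ} (hxy : x ≤ y) :
    ∫ b in Ioc x y, Real.exp (2 * b) = (exp (2 * y) - exp (2 * x)) / 2 := by
  have hderiv : ∀ z ∈ uIcc x y, HasDerivAt (fun b => Real.exp (2 * b) / 2) (Real.exp (2 * z)) z := by
    intro z _
    have h1 : HasDerivAt (fun b : ℝ => 2 * b) 2 z := by
      simpa using (hasDerivAt_id z).const_mul 2
    have h2 := (h1.exp).div_const 2
    refine h2.congr_deriv ?_
    ring
  have hint : IntervalIntegrable (fun b => Real.exp (2 * b)) volume x y :=
    (continuous_exp.comp (continuous_const.mul continuous_id)).intervalIntegrable x y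
  rw [← intervalIntegral.integral_of_le hxy,
    intervalIntegral.integral_eq_sub_of_hasDerivAt hderiv hint]
  ring

lemma ag_disj {x y : ℝ} : Disjoint (Iic x) (Ioc x y) := by
  rw [Set.disjoint_left]
  intro b hb hb2
  exact absurd hb2.1 (not_lt.mpr hb)

lemma ag_intOn_M {t : ℝ} (ht : 1 ≤ t) :
    IntegrableOn (fun b => Real.exp b * agMfun t b) (Iic t) := by
  have h1 : Iic (1:ℝ) ∪ Ioc (1:ℝ) t = Iic t := Iic_union_Ioc_eq_Iic ht
  have h0 : Iic (0:ℝ) ∪ Ioc (0:ℝ) 1 = Iic 1 := Iic_union_Ioc_eq_Iic zero_le_one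
  rw [← h1, ← h0]
  refine IntegrableOn.union (IntegrableOn.union ?_ ?_) ?_
  · refine (integrableOn_zero (s := Iic (0:ℝ))).congr_fun ?_ measurableSet_Iic
    intro b hb
    simp [agMfun, mem_Iic.mp hb]
  · refine (Continuous.integrableOn_Ioc (a := (0:ℝ)) (b := (1:ℝ))
      (f := fun b => Real.exp (1 - t) * (b * Real.exp b))
      (continuous_const.mul (continuous_id.mul continuous_exp))).congr_fun ?_ measurableSet_Ioc
    intro b hb
    simp only [agMfun, if_neg (not_le.mpr hb.1), if_pos hb.2, id]
    ring
  · refine (Continuous.integrableOn_Ioc (a := (1:ℝ)) (b := t)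
      (f := fun b => Real.exp (-t) * Real.exp (2 * b))
      (continuous_const.mul
        (continuous_exp.comp (continuous_const.mul continuous_id)))).congr_fun ?_ measurableSet_Ioc
    intro b hb
    have hb0 : ¬ b ≤ 0 := by push_neg; linarith [hb.1]
    simp only [agMfun, if_neg hb0, if_neg (not_le.mpr hb.1), Function.comp, id]
    rw [← Real.exp_add, ← Real.exp_add]
    ring_nf

lemma ag_intOn_C {t a : ℝ} (ht : 1 ≤ t) (ha0 : 0 ≤ a) (ha1 : a ≤ 1) :
    IntegrableOn (fun b => Real.exp b * agCfun t a b) (Iic t) := by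
  have h2 : Iic (a + t - 1) ∪ Ioc (a + t - 1) t = Iic t := Iic_union_Ioc_eq_Iic (by linarith)
  have h1 : Iic a ∪ Ioc a (a + t - 1) = Iic (a + t - 1) := Iic_union_Ioc_eq_Iic (by linarith)
  have h0 : Iic (0:ℝ) ∪ Ioc 0 a = Iic a := Iic_union_Ioc_eq_Iic ha0
  rw [← h2, ← h1, ← h0]
  refine IntegrableOn.union (IntegrableOn.union (IntegrableOn.union ?_ ?_) ?_) ?_
  · refine (integrableOn_zero (s := Iic (0:ℝ))).congr_fun ?_ measurableSet_Iic
    intro b hb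
    simp [agCfun, mem_Iic.mp hb]
  · refine (Continuous.integrableOn_Ioc (a := (0:ℝ)) (b := a)
      (f := fun b => Real.exp (1 - t) * (b * Real.exp b))
      (continuous_const.mul (continuous_id.mul continuous_exp))).congr_fun ?_ measurableSet_Ioc
    intro b hb
    simp only [agCfun, if_neg (not_le.mpr hb.1), if_pos hb.2, id]
    ring
  · refine (Continuous.integrableOn_Ioc (a := a) (b := a + t - 1)
      (f := fun b => a * Real.exp (1 - t - a) * Real.exp (2 * b))
      ((continuous_const.mul continuous_const).mul
        (continuous_exp.comp (continuous_const.mul continuous_id)))).congr_fun ?_ measurableSet_Ioc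
    intro b hb
    have hb0 : ¬ b ≤ 0 := by push_neg; linarith [hb.1]
    simp only [agCfun, if_neg hb0, if_neg (not_le.mpr hb.1), if_pos hb.2]
    rw [mul_assoc, ← Real.exp_add, show 1 - t - a + 2 * b = b + (b - a + 1 - t) by ring,
      Real.exp_add]
    ring
  · refine (Continuous.integrableOn_Ioc (a := a + t - 1) (b := t)
      (f := fun b => a * Real.exp b)
      (continuous_const.mul continuous_exp)).congr_fun ?_ measurableSet_Ioc
    intro b hb
    have hb0 : ¬ b ≤ 0 := by push_neg; linarith [hb.1]
    have hba : ¬ b ≤ a := by push_neg; linarith [hb.1]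
    simp only [agCfun, if_neg hb0, if_neg hba, if_neg (not_le.mpr hb.1)]
    ring

lemma ag_S2 {t : ℝ} (ht : 1 ≤ t) : ∫ b in Iic t, Real.exp b * agMfun t b
    = Real.exp (1 - t) + Real.exp (-t) * ((Real.exp (2 * t) - Real.exp 2) / 2) := by
  have h1 : Iic (1:ℝ) ∪ Ioc (1:ℝ) t = Iic t := Iic_union_Ioc_eq_Iic ht
  have h0 : Iic (0:ℝ) ∪ Ioc (0:ℝ) 1 = Iic 1 := Iic_union_Ioc_eq_Iic zero_le_one
  have hIM := ag_intOn_M ht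
  rw [← h1] at hIM ⊢
  rw [setIntegral_union ag_disj measurableSet_Ioc
    (hIM.mono_set subset_union_left) (hIM.mono_set subset_union_right)]
  have hIM0 := hIM.mono_set (subset_union_left (s := Iic (1:ℝ)) (t := Ioc (1:ℝ) t))
  rw [← h0] at hIM0 ⊢
  rw [setIntegral_union ag_disj measurableSet_Ioc
    (hIM0.mono_set subset_union_left) (hIM0.mono_set subset_union_right)]
  have e0 : ∫ b in Iic (0:ℝ), Real.exp b * agMfun t b = 0 := by
    rw [setIntegral_congr_fun measurableSet_Iic (g := fun _ => (0:ℝ))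
      (fun b hb => by simp [agMfun, mem_Iic.mp hb])]
    simp
  have e1 : ∫ b in Ioc (0:ℝ) 1, Real.exp b * agMfun t b = Real.exp (1 - t) := by
    rw [setIntegral_congr_fun measurableSet_Ioc
      (g := fun b => Real.exp (1 - t) * (b * Real.exp b))
      (fun b hb => by
        simp only [agMfun, if_neg (not_le.mpr hb.1), if_pos hb.2]
        ring)]
    rw [integral_const_mul _ _, ag_ioc_bexp zero_le_one]
    norm_num [Real.exp_zero]
  have e2 : ∫ b in Ioc (1:ℝ) t, Real.exp b * agMfun t b
      = Real.exp (-t) * ((Real.exp (2 * t) - Real.exp 2) / 2) := by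
    rw [setIntegral_congr_fun measurableSet_Ioc
      (g := fun b => Real.exp (-t) * Real.exp (2 * b))
      (fun b hb => by
        have hb0 : ¬ b ≤ 0 := by push_neg; linarith [hb.1]
        simp only [agMfun, if_neg hb0, if_neg (not_le.mpr hb.1)]
        rw [← Real.exp_add, ← Real.exp_add]
        ring_nf)]
    rw [integral_const_mul _ _, ag_ioc_exp2 ht]
    norm_num
  rw [e0, e1, e2]
  ring

lemma ag_S3 {t a : ℝ} (ht : 1 ≤ t) (ha0 : 0 ≤ a) (ha1 : a ≤ 1) :
    ∫ b in Iic t, Real.exp b * agCfun t a b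
    = Real.exp (1 - t) * ((a - 1) * Real.exp a + 1)
      + a * Real.exp (1 - t - a) * ((Real.exp (2 * (a + t - 1)) - Real.exp (2 * a)) / 2)
      + a * (Real.exp t - Real.exp (a + t - 1)) := by
  have h2 : Iic (a + t - 1) ∪ Ioc (a + t - 1) t = Iic t := Iic_union_Ioc_eq_Iic (by linarith)
  have h1 : Iic a ∪ Ioc a (a + t - 1) = Iic (a + t - 1) := Iic_union_Ioc_eq_Iic (by linarith)
  have h0 : Iic (0:ℝ) ∪ Ioc 0 a = Iic a := Iic_union_Ioc_eq_Iic ha0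
  have hIC := ag_intOn_C ht ha0 ha1
  rw [← h2] at hIC ⊢
  rw [setIntegral_union ag_disj measurableSet_Ioc
    (hIC.mono_set subset_union_left) (hIC.mono_set subset_union_right)]
  have hIC1 := hIC.mono_set (subset_union_left (s := Iic (a + t - 1)) (t := Ioc (a + t - 1) t))
  rw [← h1] at hIC1 ⊢
  rw [setIntegral_union ag_disj measurableSet_Ioc
    (hIC1.mono_set subset_union_left) (hIC1.mono_set subset_union_right)]
  have hIC0 := hIC1.mono_set subset_union_left
  rw [← h0] at hIC0 ⊢
  rw [setIntegral_union ag_disj measurableSet_Ioc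
    (hIC0.mono_set subset_union_left) (hIC0.mono_set subset_union_right)]
  have e0 : ∫ b in Iic (0:ℝ), Real.exp b * agCfun t a b = 0 := by
    rw [setIntegral_congr_fun measurableSet_Iic (g := fun _ => (0:ℝ))
      (fun b hb => by simp [agCfun, mem_Iic.mp hb])]
    simp
  have e1 : ∫ b in Ioc (0:ℝ) a, Real.exp b * agCfun t a b
      = Real.exp (1 - t) * ((a - 1) * Real.exp a + 1) := by
    rw [setIntegral_congr_fun measurableSet_Ioc
      (g := fun b => Real.exp (1 - t) * (b * Real.exp b))
      (fun b hb => by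
        simp only [agCfun, if_neg (not_le.mpr hb.1), if_pos hb.2]
        ring)]
    rw [integral_const_mul _ _, ag_ioc_bexp ha0]
    rw [Real.exp_zero]
    ring
  have e2 : ∫ b in Ioc a (a + t - 1), Real.exp b * agCfun t a b
      = a * Real.exp (1 - t - a) * ((Real.exp (2 * (a + t - 1)) - Real.exp (2 * a)) / 2) := by
    rw [setIntegral_congr_fun measurableSet_Ioc
      (g := fun b => a * Real.exp (1 - t - a) * Real.exp (2 * b))
      (fun b hb => by
        have hb0 : ¬ b ≤ 0 := by push_neg; linarith [hb.1]
        simp only [agCfun, if_neg hb0, if_neg (not_le.mpr hb.1), if_pos hb.2]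
        rw [mul_assoc, ← Real.exp_add, show (1 - t - a) + 2 * b = b + (b - a + 1 - t) by ring,
          Real.exp_add]
        ring)]
    rw [integral_const_mul _ _, ag_ioc_exp2 (by linarith)]
  have e3 : ∫ b in Ioc (a + t - 1) t, Real.exp b * agCfun t a b
      = a * (Real.exp t - Real.exp (a + t - 1)) := by
    rw [setIntegral_congr_fun measurableSet_Ioc
      (g := fun b => a * Real.exp b)
      (fun b hb => by
        have hb0 : ¬ b ≤ 0 := by push_neg; linarith [hb.1]
        have hba : ¬ b ≤ a := by push_neg; linarith [hb.1]
        simp only [agCfun, if_neg hb0, if_neg hba, if_neg (not_le.mpr hb.1)]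
        ring)]
    rw [integral_const_mul _ _, ag_ioc_exp (by linarith)]
  rw [e0, e1, e2, e3]
  ring

end realInts

noncomputable def agJ (t a : ℝ) : ℝ :=
  (Real.exp t + Real.exp (2 - t)) / 2 + (a / 2 - 1) * Real.exp (a + 1 - t)
    - a / 2 * Real.exp (a + t - 1)

lemma ag_rho_intOn {t a : ℝ} (ht : 1 ≤ t) (ha0 : 0 ≤ a) (ha1 : a ≤ 1) :
    IntegrableOn (fun b => Real.exp b * (1 - (a + agMfun t b - agCfun t a b))) (Iic t) := by
  have hfun : (fun b => Real.exp b * (1 - (a + agMfun t b - agCfun t a b)))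
      = fun b => ((1 - a) * Real.exp b - Real.exp b * agMfun t b) + Real.exp b * agCfun t a b :=
    funext fun b => by ring
  rw [hfun]
  exact (((integrableOn_exp_Iic t).const_mul (1 - a)).sub (ag_intOn_M ht)).add
    (ag_intOn_C ht ha0 ha1)

lemma ag_Jval {t a : ℝ} (ht : 1 ≤ t) (ha0 : 0 ≤ a) (ha1 : a ≤ 1) :
    ∫ b in Iic t, Real.exp b * (1 - (a + agMfun t b - agCfun t a b)) = agJ t a := by
  have hfun : (fun b => Real.exp b * (1 - (a + agMfun t b - agCfun t a b)))
      = fun b => ((1 - a) * Real.exp b - Real.exp b * agMfun t b) + Real.exp b * agCfun t a b :=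
    funext fun b => by ring
  have h1 : IntegrableOn (fun b => (1 - a) * Real.exp b) (Iic t) :=
    (integrableOn_exp_Iic t).const_mul (1 - a)
  have h2 := ag_intOn_M ht
  have h3 := ag_intOn_C ht (a := a) ha0 ha1
  have h12 : IntegrableOn (fun b => (1 - a) * Real.exp b - Real.exp b * agMfun t b) (Iic t) :=
    h1.sub h2
  rw [hfun, integral_add h12 h3, integral_sub h1 h2,
    integral_const_mul _ _, integral_exp_Iic, ag_S2 ht, ag_S3 ht ha0 ha1]
  rw [agJ,
    show Real.exp (1 - t) = Real.exp 1 / Real.exp t from Real.exp_sub 1 t,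
    show Real.exp (-t) = (Real.exp t)⁻¹ from Real.exp_neg t,
    show Real.exp (2 * t) = Real.exp t * Real.exp t by
      rw [← Real.exp_add]; ring_nf,
    show Real.exp 2 = Real.exp 1 * Real.exp 1 by
      rw [← Real.exp_add]; norm_num,
    show Real.exp (1 - t - a) = Real.exp 1 / Real.exp t / Real.exp a by
      rw [← Real.exp_sub, ← Real.exp_sub],
    show Real.exp (2 * (a + t - 1)) = Real.exp a * Real.exp a * (Real.exp t * Real.exp t)
        / (Real.exp 1 * Real.exp 1) by
      rw [show 2 * (a + t - 1) = a + a + (t + t) - (1 + 1) by ring, Real.exp_sub,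
        Real.exp_add, Real.exp_add, Real.exp_add, Real.exp_add],
    show Real.exp (2 * a) = Real.exp a * Real.exp a by
      rw [← Real.exp_add]; ring_nf,
    show Real.exp (a + t - 1) = Real.exp a * Real.exp t / Real.exp 1 by
      rw [← Real.exp_add, ← Real.exp_sub],
    show Real.exp (2 - t) = Real.exp 1 * Real.exp 1 / Real.exp t by
      rw [← Real.exp_add, ← Real.exp_sub]; norm_num,
    show Real.exp (a + 1 - t) = Real.exp a * Real.exp 1 / Real.exp t by
      rw [← Real.exp_add, ← Real.exp_sub]]
  field_simp
  ring

noncomputable def agK (t : ℝ) (q r : ℝ × ℝ) : ℝ≥0∞ :=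
  ENNReal.ofReal (if 0 ≤ r.1 ∧ r.1 ≤ 1 ∧ r.2 ≤ t ∧ r.1 < q.1 ∧ r.2 < q.2
    then ((1 - r.1) * Real.exp (-r.1)) * Real.exp r.2 else 0)

noncomputable def agG (t a b : ℝ) : ℝ :=
  if 0 ≤ a ∧ a ≤ 1 ∧ b ≤ t
    then ((1 - a) * Real.exp (-a)) * (Real.exp b * (1 - (a + agMfun t b - agCfun t a b)))
    else 0

lemma ag_K_int {t : ℝ} (ht : 1 ≤ t) {q : ℝ × ℝ}
    (hq : 0 ≤ q.1 ∧ q.1 ≤ 1 ∧ q.1 ≤ q.2 ∧ q.2 ≤ q.1 + t - 1) :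
    ∫⁻ r : ℝ × ℝ, agK t q r = ENNReal.ofReal (q.1 * Real.exp (q.2 - q.1)) := by
  obtain ⟨h0, h1, h12, h2t⟩ := hq
  have hq2t : q.2 ≤ t := by linarith
  have hset : ∀ r : ℝ × ℝ,
      (0 ≤ r.1 ∧ r.1 ≤ 1 ∧ r.2 ≤ t ∧ r.1 < q.1 ∧ r.2 < q.2) ↔ r ∈ Ico 0 q.1 ×ˢ Iio q.2 := by
    intro r
    simp only [mem_prod, mem_Ico, mem_Iio]
    constructor
    · rintro ⟨a1, a2, a3, a4, a5⟩; exact ⟨⟨a1, a4⟩, a5⟩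
    · rintro ⟨⟨a1, a4⟩, a5⟩
      exact ⟨a1, by linarith, by linarith, a4, a5⟩
  have hfun : (fun r => agK t q r)
      = (Ico 0 q.1 ×ˢ Iio q.2).indicator
        (fun r : ℝ × ℝ => ENNReal.ofReal (((1 - r.1) * Real.exp (-r.1)) * Real.exp r.2)) := by
    funext r
    rw [agK, Set.indicator_apply]
    by_cases hr : r ∈ Ico 0 q.1 ×ˢ Iio q.2
    · rw [if_pos ((hset r).mpr hr), if_pos hr]
    · rw [if_neg (fun hc => hr ((hset r).mp hc)), if_neg hr, ENNReal.ofReal_zero]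
  rw [hfun, lintegral_indicator (measurableSet_Ico.prod measurableSet_Iio)]
  rw [Measure.volume_eq_prod, ← Measure.prod_restrict, lintegral_prod]
  swap
  · apply Measurable.aemeasurable
    apply ENNReal.measurable_ofReal.comp
    apply Measurable.mul
    · exact ((measurable_const.sub measurable_fst).mul
        (Real.measurable_exp.comp measurable_fst.neg))
    · exact Real.measurable_exp.comp measurable_snd
  have hinner : ∀ a : ℝ, a ∈ Ico (0:ℝ) q.1 →
      (∫⁻ b in Iio q.2, ENNReal.ofReal (((1 - a) * Real.exp (-a)) * Real.exp b))
        = ENNReal.ofReal ((((1 - a) * Real.exp (-a)) * Real.exp q.2)) := by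
    intro a ha
    have ha1 : a ≤ 1 := by
      have := ha.2; linarith
    have hnn : (0:ℝ) ≤ (1 - a) * Real.exp (-a) := by
      have := Real.exp_pos (-a); nlinarith
    rw [← ofReal_integral_eq_lintegral_ofReal]
    · rw [integral_const_mul _ _, setIntegral_congr_set Iio_ae_eq_Iic, integral_exp_Iic]
    · exact (((integrableOn_exp_Iic q.2).mono_set Iio_subset_Iic_self)).const_mul _
    · filter_upwards with b
      positivity
  calc ∫⁻ a in Ico 0 q.1, ∫⁻ b in Iio q.2,
        ENNReal.ofReal ((1 - (a, b).1) * Real.exp (-(a, b).1) * Real.exp (a, b).2)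
      = ∫⁻ a in Ico 0 q.1, ENNReal.ofReal (((1 - a) * Real.exp (-a)) * Real.exp q.2) := by
        apply setLIntegral_congr_fun measurableSet_Ico
        intro a ha
        exact hinner a ha
    _ = ENNReal.ofReal (q.1 * Real.exp (-q.1) * Real.exp q.2) := by
        rw [setLIntegral_congr Ico_ae_eq_Ioc, ← ofReal_integral_eq_lintegral_ofReal]
        · congr 1
          rw [← intervalIntegral.integral_of_le h0]
          have hderiv : ∀ z ∈ uIcc (0:ℝ) q.1,
              HasDerivAt (fun x => x * Real.exp (-x) * Real.exp q.2)
                ((1 - z) * Real.exp (-z) * Real.exp q.2) z := by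
            intro z _
            have hneg : HasDerivAt (fun x : ℝ => -x) (-1) z := (hasDerivAt_id z).neg
            have hexp := hneg.exp
            have h1 := ((hasDerivAt_id z).mul hexp).mul_const (Real.exp q.2)
            refine h1.congr_deriv ?_
            simp only [id_eq]
            ring
          rw [intervalIntegral.integral_eq_sub_of_hasDerivAt hderiv]
          · simp [Real.exp_zero]
          · apply Continuous.intervalIntegrable
            exact ((continuous_const.sub continuous_id).mul
              (Real.continuous_exp.comp continuous_neg)).mul continuous_const
        · exact Continuous.integrableOn_Ioc (((continuous_const.sub continuous_id).mul
            (Real.continuous_exp.comp continuous_neg)).mul continuous_const)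
        · filter_upwards [ae_restrict_mem measurableSet_Ioc] with a ha
          have hp := Real.exp_pos (-a)
          have hp2 := Real.exp_pos q.2
          have ha1 : a ≤ 1 := by linarith [ha.2]
          exact mul_nonneg (mul_nonneg (by linarith) hp.le) hp2.le
    _ = ENNReal.ofReal (q.1 * Real.exp (q.2 - q.1)) := by
        congr 1
        rw [Real.exp_sub, Real.exp_neg]
        have := Real.exp_ne_zero q.1
        field_simp

lemma agK_meas {t : ℝ} : Measurable (fun p : (ℝ × ℝ) × (ℝ × ℝ) => agK t p.1 p.2) := by
  unfold agK
  apply ENNReal.measurable_ofReal.comp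
  apply Measurable.ite
  · have : {p : (ℝ × ℝ) × (ℝ × ℝ) |
        0 ≤ p.2.1 ∧ p.2.1 ≤ 1 ∧ p.2.2 ≤ t ∧ p.2.1 < p.1.1 ∧ p.2.2 < p.1.2}
        = {p : (ℝ × ℝ) × (ℝ × ℝ) | 0 ≤ p.2.1} ∩ ({p | p.2.1 ≤ 1} ∩ ({p | p.2.2 ≤ t}
          ∩ ({p | p.2.1 < p.1.1} ∩ {p | p.2.2 < p.1.2}))) := by
      ext p; simp [mem_setOf_eq, mem_inter_iff]
    rw [this]
    have hm21 : Measurable (fun p : (ℝ × ℝ) × (ℝ × ℝ) => p.2.1) := measurable_fst.comp measurable_snd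
    have hm22 : Measurable (fun p : (ℝ × ℝ) × (ℝ × ℝ) => p.2.2) := measurable_snd.comp measurable_snd
    have hm11 : Measurable (fun p : (ℝ × ℝ) × (ℝ × ℝ) => p.1.1) := measurable_fst.comp measurable_fst
    have hm12 : Measurable (fun p : (ℝ × ℝ) × (ℝ × ℝ) => p.1.2) := measurable_snd.comp measurable_fst
    exact (measurableSet_le measurable_const hm21).inter
      ((measurableSet_le hm21 measurable_const).inter
        ((measurableSet_le hm22 measurable_const).inter
          ((measurableSet_lt hm21 hm11).inter (measurableSet_lt hm22 hm12))))
  · have hm21 : Measurable (fun p : (ℝ × ℝ) × (ℝ × ℝ) => p.2.1) := measurable_fst.comp measurable_snd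
    have hm22 : Measurable (fun p : (ℝ × ℝ) × (ℝ × ℝ) => p.2.2) := measurable_snd.comp measurable_snd
    exact ((measurable_const.sub hm21).mul (Real.measurable_exp.comp hm21.neg)).mul
      (Real.measurable_exp.comp hm22)
  · exact measurable_const

lemma agM_meas {t : ℝ} : Measurable (agMfun t) := by
  unfold agMfun
  apply Measurable.ite (measurableSet_le measurable_id measurable_const) measurable_const
  apply Measurable.ite (measurableSet_le measurable_id measurable_const)
  · exact measurable_id.mul_const _
  · exact Real.measurable_exp.comp (measurable_id.sub_const _)

lemma agC_meas {t : ℝ} : Measurable (fun r : ℝ × ℝ => agCfun t r.1 r.2) := by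
  unfold agCfun
  apply Measurable.ite (measurableSet_le measurable_snd measurable_const) measurable_const
  apply Measurable.ite (measurableSet_le measurable_snd measurable_fst)
  · exact measurable_snd.mul_const _
  apply Measurable.ite
  · exact measurableSet_le measurable_snd ((measurable_fst.add_const _).sub_const _)
  · exact measurable_fst.mul
      (Real.measurable_exp.comp (((measurable_snd.sub measurable_fst).add_const _).sub_const _))
  · exact measurable_fst

lemma agG_meas {t : ℝ} : Measurable (fun r : ℝ × ℝ => agG t r.1 r.2) := by
  unfold agG
  apply Measurable.ite
  · have : {r : ℝ × ℝ | 0 ≤ r.1 ∧ r.1 ≤ 1 ∧ r.2 ≤ t}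
        = {r : ℝ × ℝ | 0 ≤ r.1} ∩ ({r : ℝ × ℝ | r.1 ≤ 1} ∩ {r : ℝ × ℝ | r.2 ≤ t}) := by
      ext r; simp [mem_setOf_eq]
    rw [this]
    exact (measurableSet_le measurable_const measurable_fst).inter
      ((measurableSet_le measurable_fst measurable_const).inter
        (measurableSet_le measurable_snd measurable_const))
  · refine Measurable.mul ?_ ?_
    · exact (measurable_const.sub measurable_fst).mul
        (Real.measurable_exp.comp measurable_fst.neg)
    · refine (Real.measurable_exp.comp measurable_snd).mul ?_
      refine measurable_const.sub ?_
      exact (measurable_fst.add (agM_meas.comp measurable_snd)).sub agC_meas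
  · exact measurable_const

section nuFacts2

variable {ν : Measure (ℝ × ℝ)} [IsProbabilityMeasure ν] {t : ℝ}
variable (hsupp : ∀ᵐ q ∂ν, 0 ≤ q.1 ∧ q.1 ≤ 1 ∧ q.1 ≤ q.2 ∧ q.2 ≤ q.1 + t - 1)
variable (hcdf : ∀ z w : ℝ, 0 ≤ z → z ≤ 1 → z ≤ w → w ≤ z + t - 1 →
      ν {q | q.1 ≤ z ∧ q.2 ≤ w} = ENNReal.ofReal (z * Real.exp (-(z + t - w - 1))))

include hsupp hcdf

lemma ag_K_nu (ht : 1 ≤ t) (r : ℝ × ℝ) :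
    ∫⁻ q, agK t q r ∂ν = ENNReal.ofReal (agG t r.1 r.2) := by
  by_cases hc : 0 ≤ r.1 ∧ r.1 ≤ 1 ∧ r.2 ≤ t
  · obtain ⟨hr0, hr1, hrt⟩ := hc
    have hqset : MeasurableSet {q : ℝ × ℝ | r.1 < q.1 ∧ r.2 < q.2} := by
      have : {q : ℝ × ℝ | r.1 < q.1 ∧ r.2 < q.2}
          = {q : ℝ × ℝ | r.1 < q.1} ∩ {q : ℝ × ℝ | r.2 < q.2} := by
        ext q; simp [mem_setOf_eq]
      rw [this]
      exact (measurableSet_lt measurable_const measurable_fst).inter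
        (measurableSet_lt measurable_const measurable_snd)
    have hfun : (fun q => agK t q r) = fun q =>
        ENNReal.ofReal (((1 - r.1) * Real.exp (-r.1)) * Real.exp r.2) *
          ({q : ℝ × ℝ | r.1 < q.1 ∧ r.2 < q.2}.indicator 1 q) := by
      funext q
      rw [agK, Set.indicator_apply]
      by_cases hq : q ∈ {q : ℝ × ℝ | r.1 < q.1 ∧ r.2 < q.2}
      · rw [if_pos ⟨hr0, hr1, hrt, hq.1, hq.2⟩, if_pos hq, Pi.one_apply, mul_one]
      · rw [if_neg (fun hcond => hq ⟨hcond.2.2.2.1, hcond.2.2.2.2⟩), if_neg hq,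
          mul_zero, ENNReal.ofReal_zero]
    rw [hfun, lintegral_const_mul' _ _ ENNReal.ofReal_ne_top, lintegral_indicator_one hqset,
      (ag_quadrant hsupp hcdf ht hr0 hr1 hrt).1]
    have hnn : (0:ℝ) ≤ (1 - r.1) * Real.exp (-r.1) * Real.exp r.2 := by
      have h1 := Real.exp_pos (-r.1)
      have h2 := Real.exp_pos r.2
      exact mul_nonneg (mul_nonneg (by linarith) h1.le) h2.le
    rw [← ENNReal.ofReal_mul hnn, agG, if_pos ⟨hr0, hr1, hrt⟩]
    congr 1
    ring
  · have hfun : (fun q => agK t q r) = fun _ => 0 := funext fun q => by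
      rw [agK, if_neg (fun hcond => hc ⟨hcond.1, hcond.2.1, hcond.2.2.1⟩), ENNReal.ofReal_zero]
    rw [hfun, agG, if_neg hc, ENNReal.ofReal_zero, lintegral_zero]

lemma ag_J_nonneg (ht : 1 ≤ t) {a : ℝ} (ha0 : 0 ≤ a) (ha1 : a ≤ 1) : 0 ≤ agJ t a := by
  rw [← ag_Jval ht ha0 ha1]
  apply setIntegral_nonneg measurableSet_Iic
  intro b hb
  exact mul_nonneg (Real.exp_pos b).le
    (ag_quadrant hsupp hcdf ht (a := a) (b := b) ha0 ha1 (mem_Iic.mp hb)).2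

lemma ag_G_inner (ht : 1 ≤ t) (a : ℝ) :
    ∫⁻ b, ENNReal.ofReal (agG t a b)
      = ENNReal.ofReal (if 0 ≤ a ∧ a ≤ 1 then ((1 - a) * Real.exp (-a)) * agJ t a else 0) := by
  by_cases ha : 0 ≤ a ∧ a ≤ 1
  · rw [if_pos ha]
    have hfun : (fun b => ENNReal.ofReal (agG t a b)) = (Iic t).indicator
        (fun b => ENNReal.ofReal (((1 - a) * Real.exp (-a))
          * (Real.exp b * (1 - (a + agMfun t b - agCfun t a b))))) := by
      funext b
      rw [agG, Set.indicator_apply]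
      by_cases hb : b ∈ Iic t
      · rw [if_pos ⟨ha.1, ha.2, hb⟩, if_pos hb]
      · rw [if_neg (fun hcond => hb hcond.2.2), ENNReal.ofReal_zero, if_neg hb]
    rw [hfun, lintegral_indicator measurableSet_Iic, ← ofReal_integral_eq_lintegral_ofReal]
    · rw [integral_const_mul _ _, ag_Jval ht ha.1 ha.2]
    · exact (ag_rho_intOn ht ha.1 ha.2).const_mul _
    · filter_upwards [ae_restrict_mem measurableSet_Iic] with b hb
      have h1 := Real.exp_pos (-a)
      have h2 := (ag_quadrant hsupp hcdf ht (a := a) (b := b) ha.1 ha.2 (mem_Iic.mp hb)).2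
      exact mul_nonneg (mul_nonneg (by linarith [ha.2]) h1.le)
        (mul_nonneg (Real.exp_pos b).le h2)
  · rw [if_neg ha]
    have hfun : (fun b => ENNReal.ofReal (agG t a b)) = fun _ => 0 := funext fun b => by
      rw [agG, if_neg (fun hcond => ha ⟨hcond.1, hcond.2.1⟩), ENNReal.ofReal_zero]
    rw [hfun, lintegral_zero, ENNReal.ofReal_zero]

lemma ag_outer (ht : 1 ≤ t) :
    ∫⁻ a : ℝ, ENNReal.ofReal (if 0 ≤ a ∧ a ≤ 1 then ((1 - a) * Real.exp (-a)) * agJ t a else 0)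
      = ENNReal.ofReal (5 / 12 * Real.exp (t - 1) + 1 / 12 * Real.exp (1 - t)) := by
  have hfun : (fun a : ℝ => ENNReal.ofReal
        (if 0 ≤ a ∧ a ≤ 1 then ((1 - a) * Real.exp (-a)) * agJ t a else 0))
      = (Icc (0:ℝ) 1).indicator
        (fun a => ENNReal.ofReal (((1 - a) * Real.exp (-a)) * agJ t a)) := by
    funext a
    rw [Set.indicator_apply]
    by_cases ha : a ∈ Icc (0:ℝ) 1
    · rw [if_pos (mem_Icc.mp ha), if_pos ha]
    · rw [if_neg (fun hc => ha (mem_Icc.mpr hc)), ENNReal.ofReal_zero, if_neg ha]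
  have hJcont : Continuous (agJ t) := by
    unfold agJ
    fun_prop
  rw [hfun, lintegral_indicator measurableSet_Icc, ← ofReal_integral_eq_lintegral_ofReal]
  · congr 1
    rw [integral_Icc_eq_integral_Ioc, ← intervalIntegral.integral_of_le zero_le_one]
    have h3 : ∀ x : ℝ, HasDerivAt (fun x : ℝ => x ^ 3) (3 * x ^ 2) x := fun x => by
      simpa using hasDerivAt_pow 3 x
    have h2 : ∀ x : ℝ, HasDerivAt (fun x : ℝ => x ^ 2) (2 * x) x := fun x => by
      simpa using hasDerivAt_pow 2 x
    have hderiv : ∀ x ∈ uIcc (0:ℝ) 1,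
        HasDerivAt (fun x => (Real.exp t + Real.exp (2 - t)) / 2 * (x * Real.exp (-x))
            + Real.exp (1 - t) * (-(x ^ 3) / 6 + 3 / 4 * x ^ 2 - x)
            - Real.exp (t - 1) * (x ^ 2 / 4 - x ^ 3 / 6))
          ((1 - x) * Real.exp (-x) * agJ t x) x := by
      intro x _
      have hx : HasDerivAt (fun x : ℝ => x * Real.exp (-x))
          (1 * Real.exp (-x) + x * (Real.exp (-x) * -1)) x :=
        (hasDerivAt_id x).mul ((hasDerivAt_id x).neg.exp)
      have hp1 : HasDerivAt (fun x : ℝ => -(x ^ 3) / 6 + 3 / 4 * x ^ 2 - x)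
          ((-(3 * x ^ 2)) / 6 + 3 / 4 * (2 * x) - 1) x :=
        ((((h3 x).neg.div_const 6).add ((h2 x).const_mul (3/4))).sub (hasDerivAt_id x))
      have hp2 : HasDerivAt (fun x : ℝ => x ^ 2 / 4 - x ^ 3 / 6)
          ((2 * x) / 4 - (3 * x ^ 2) / 6) x :=
        ((h2 x).div_const 4).sub ((h3 x).div_const 6)
      have hall := ((hx.const_mul ((Real.exp t + Real.exp (2 - t)) / 2)).add
        (hp1.const_mul (Real.exp (1 - t)))).sub (hp2.const_mul (Real.exp (t - 1)))
      refine hall.congr_deriv ?_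
      rw [agJ,
        show Real.exp (x + 1 - t) = Real.exp x * Real.exp 1 / Real.exp t by
          rw [← Real.exp_add, ← Real.exp_sub],
        show Real.exp (x + t - 1) = Real.exp x * Real.exp t / Real.exp 1 by
          rw [← Real.exp_add, ← Real.exp_sub],
        show Real.exp (1 - t) = Real.exp 1 / Real.exp t from Real.exp_sub 1 t,
        show Real.exp (t - 1) = Real.exp t / Real.exp 1 from Real.exp_sub t 1,
        Real.exp_neg]
      have e1 := Real.exp_ne_zero 1
      have et := Real.exp_ne_zero t
      have ex := Real.exp_ne_zero x
      field_simp
      ring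
    rw [intervalIntegral.integral_eq_sub_of_hasDerivAt hderiv]
    · rw [show Real.exp (2 - t) = Real.exp 1 * Real.exp 1 / Real.exp t by
          rw [← Real.exp_add, ← Real.exp_sub]; norm_num,
        show Real.exp (1 - t) = Real.exp 1 / Real.exp t from Real.exp_sub 1 t,
        show Real.exp (t - 1) = Real.exp t / Real.exp 1 from Real.exp_sub t 1,
        Real.exp_neg]
      simp only [neg_zero, Real.exp_zero]
      have e1 := Real.exp_ne_zero 1
      have et := Real.exp_ne_zero t
      field_simp
      ring
    · apply Continuous.intervalIntegrable
      exact (((continuous_const.sub continuous_id).mul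
        (Real.continuous_exp.comp continuous_neg)).mul hJcont)
  · apply Continuous.integrableOn_Icc
    exact (((continuous_const.sub continuous_id).mul
      (Real.continuous_exp.comp continuous_neg)).mul hJcont)
  · filter_upwards [ae_restrict_mem measurableSet_Icc] with a ha
    have h1 := Real.exp_pos (-a)
    exact mul_nonneg (mul_nonneg (by linarith [ha.2]) h1.le)
      (ag_J_nonneg hsupp hcdf ht ha.1 ha.2)

theorem ag_core (ht : 1 ≤ t) :
    ∫⁻ q, ENNReal.ofReal (q.1 * Real.exp (q.2 - q.1)) ∂ν
      = ENNReal.ofReal (5 / 12 * Real.exp (t - 1) + 1 / 12 * Real.exp (1 - t)) := by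
  have step1 : ∫⁻ q, ENNReal.ofReal (q.1 * Real.exp (q.2 - q.1)) ∂ν
      = ∫⁻ q, (∫⁻ r : ℝ × ℝ, agK t q r) ∂ν := by
    apply lintegral_congr_ae
    filter_upwards [hsupp] with q hq
    rw [ag_K_int ht hq]
  rw [step1]
  rw [lintegral_lintegral_swap (agK_meas.aemeasurable)]
  rw [lintegral_congr (fun r => ag_K_nu hsupp hcdf ht r)]
  rw [Measure.volume_eq_prod, lintegral_prod (fun r : ℝ × ℝ => ENNReal.ofReal (agG t r.1 r.2))
    (agG_meas.ennreal_ofReal.aemeasurable)]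
  rw [lintegral_congr (fun a => ag_G_inner hsupp hcdf ht a)]
  exact ag_outer hsupp hcdf ht

end nuFacts2

lemma ag_region_meas (c : ℝ) :
    MeasurableSet {p : ℝ × ℝ | 0 ≤ p.1 ∧ p.1 ≤ 1 ∧ p.1 ≤ p.2 ∧ p.2 ≤ p.1 + c - 1} := by
  have : {p : ℝ × ℝ | 0 ≤ p.1 ∧ p.1 ≤ 1 ∧ p.1 ≤ p.2 ∧ p.2 ≤ p.1 + c - 1}
      = {p : ℝ × ℝ | 0 ≤ p.1} ∩ ({p : ℝ × ℝ | p.1 ≤ 1}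
        ∩ ({p : ℝ × ℝ | p.1 ≤ p.2} ∩ {p : ℝ × ℝ | p.2 ≤ p.1 + c - 1})) := by
    ext p; simp [mem_setOf_eq]
  rw [this]
  exact (measurableSet_le measurable_const measurable_fst).inter
    ((measurableSet_le measurable_fst measurable_const).inter
      ((measurableSet_le measurable_fst measurable_snd).inter
        (measurableSet_le measurable_snd ((measurable_fst.add_const c).sub_const 1))))

/-- `Q(t) = P(H₊(1) < H₋(1), H₊(h) < H₋(t)) = (5/12) e^{-(h-t)} + (1/12) e^{-(h+t-2)}`,
where `(H₊(1), H₊(h))` and `(H₋(1), H₋(t))` are independent pairs with joint CDFs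
`F_h(z,w) = z e^{-(z+h-w-1)}` and `F_t(z,w) = z e^{-(z+t-w-1)}` on their
respective supports. -/
theorem aging_Q_formula
    {Ω : Type} [MeasureSpace Ω] [IsProbabilityMeasure (ℙ : Measure Ω)]
    (h t : ℝ) (ht : 1 < t) (hth : t ≤ h)
    (X₁ Xh Y₁ Yt : Ω → ℝ)
    (hX₁ : Measurable X₁) (hXh : Measurable Xh)
    (hY₁ : Measurable Y₁) (hYt : Measurable Yt)
    (hindep : IndepFun (fun ω => (X₁ ω, Xh ω)) (fun ω => (Y₁ ω, Yt ω)))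
    (hXsupp : ∀ᵐ ω ∂ℙ, 0 ≤ X₁ ω ∧ X₁ ω ≤ 1 ∧ X₁ ω ≤ Xh ω ∧ Xh ω ≤ X₁ ω + h - 1)
    (hYsupp : ∀ᵐ ω ∂ℙ, 0 ≤ Y₁ ω ∧ Y₁ ω ≤ 1 ∧ Y₁ ω ≤ Yt ω ∧ Yt ω ≤ Y₁ ω + t - 1)
    (hXcdf : ∀ z w : ℝ, 0 ≤ z → z ≤ 1 → z ≤ w → w ≤ z + h - 1 →
      ℙ {ω | X₁ ω ≤ z ∧ Xh ω ≤ w} = ENNReal.ofReal (z * Real.exp (-(z + h - w - 1))))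
    (hYcdf : ∀ z w : ℝ, 0 ≤ z → z ≤ 1 → z ≤ w → w ≤ z + t - 1 →
      ℙ {ω | Y₁ ω ≤ z ∧ Yt ω ≤ w} = ENNReal.ofReal (z * Real.exp (-(z + t - w - 1)))) :
    ℙ {ω | X₁ ω < Y₁ ω ∧ Xh ω < Yt ω}
      = ENNReal.ofReal
          ((5 / 12) * Real.exp (-(h - t)) + (1 / 12) * Real.exp (-(h + t - 2))) := by
  have hXm : Measurable fun ω => (X₁ ω, Xh ω) := hX₁.prodMk hXh
  have hYm : Measurable fun ω => (Y₁ ω, Yt ω) := hY₁.prodMk hYt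
  set μ : Measure (ℝ × ℝ) := Measure.map (fun ω => (X₁ ω, Xh ω)) ℙ with hμ
  set ν : Measure (ℝ × ℝ) := Measure.map (fun ω => (Y₁ ω, Yt ω)) ℙ with hν
  haveI : IsProbabilityMeasure μ := Measure.isProbabilityMeasure_map hXm.aemeasurable
  haveI : IsProbabilityMeasure ν := Measure.isProbabilityMeasure_map hYm.aemeasurable
  have hpair : Measure.map (fun ω => ((Y₁ ω, Yt ω), (X₁ ω, Xh ω))) ℙ = ν.prod μ :=
    (indepFun_iff_map_prod_eq_prod_map_map hYm.aemeasurable hXm.aemeasurable).1 hindep.symm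
  have hS : MeasurableSet {r : (ℝ × ℝ) × (ℝ × ℝ) | r.2.1 < r.1.1 ∧ r.2.2 < r.1.2} := by
    have : {r : (ℝ × ℝ) × (ℝ × ℝ) | r.2.1 < r.1.1 ∧ r.2.2 < r.1.2}
        = {r : (ℝ × ℝ) × (ℝ × ℝ) | r.2.1 < r.1.1} ∩ {r | r.2.2 < r.1.2} := by
      ext r; simp [mem_setOf_eq]
    rw [this]
    exact (measurableSet_lt (measurable_fst.comp measurable_snd)
        (measurable_fst.comp measurable_fst)).inter
      (measurableSet_lt (measurable_snd.comp measurable_snd)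
        (measurable_snd.comp measurable_fst))
  have h1 : ℙ {ω | X₁ ω < Y₁ ω ∧ Xh ω < Yt ω}
      = (ν.prod μ) {r : (ℝ × ℝ) × (ℝ × ℝ) | r.2.1 < r.1.1 ∧ r.2.2 < r.1.2} := by
    rw [← hpair, Measure.map_apply (hYm.prodMk hXm) hS]
    rfl
  -- transported hypotheses
  have hXsupp' : ∀ᵐ p ∂μ, 0 ≤ p.1 ∧ p.1 ≤ 1 ∧ p.1 ≤ p.2 ∧ p.2 ≤ p.1 + h - 1 := by
    rw [hμ, ae_map_iff hXm.aemeasurable (ag_region_meas h)]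
    exact hXsupp
  have hYsupp' : ∀ᵐ q ∂ν, 0 ≤ q.1 ∧ q.1 ≤ 1 ∧ q.1 ≤ q.2 ∧ q.2 ≤ q.1 + t - 1 := by
    rw [hν, ae_map_iff hYm.aemeasurable (ag_region_meas t)]
    exact hYsupp
  have hzw : ∀ z w : ℝ, MeasurableSet {p : ℝ × ℝ | p.1 ≤ z ∧ p.2 ≤ w} := by
    intro z w
    have : {p : ℝ × ℝ | p.1 ≤ z ∧ p.2 ≤ w} = {p : ℝ × ℝ | p.1 ≤ z} ∩ {p | p.2 ≤ w} := by
      ext p; simp [mem_setOf_eq]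
    rw [this]
    exact (measurableSet_le measurable_fst measurable_const).inter
      (measurableSet_le measurable_snd measurable_const)
  have hXcdf' : ∀ z w : ℝ, 0 ≤ z → z ≤ 1 → z ≤ w → w ≤ z + h - 1 →
      μ {p | p.1 ≤ z ∧ p.2 ≤ w} = ENNReal.ofReal (z * Real.exp (-(z + h - w - 1))) := by
    intro z w a1 a2 a3 a4
    rw [hμ, Measure.map_apply hXm (hzw z w)]
    exact hXcdf z w a1 a2 a3 a4
  have hYcdf' : ∀ z w : ℝ, 0 ≤ z → z ≤ 1 → z ≤ w → w ≤ z + t - 1 →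
      ν {q | q.1 ≤ z ∧ q.2 ≤ w} = ENNReal.ofReal (z * Real.exp (-(z + t - w - 1))) := by
    intro z w a1 a2 a3 a4
    rw [hν, Measure.map_apply hYm (hzw z w)]
    exact hYcdf z w a1 a2 a3 a4
  rw [h1, Measure.prod_apply hS]
  have hstep : ∫⁻ q, μ (Prod.mk q ⁻¹'
        {r : (ℝ × ℝ) × (ℝ × ℝ) | r.2.1 < r.1.1 ∧ r.2.2 < r.1.2}) ∂ν
      = ∫⁻ q, ENNReal.ofReal (Real.exp (1 - h))
          * ENNReal.ofReal (q.1 * Real.exp (q.2 - q.1)) ∂ν := by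
    apply lintegral_congr_ae
    filter_upwards [hYsupp'] with q hq
    have hpre : (Prod.mk q ⁻¹' {r : (ℝ × ℝ) × (ℝ × ℝ) | r.2.1 < r.1.1 ∧ r.2.2 < r.1.2})
        = {p : ℝ × ℝ | p.1 < q.1 ∧ p.2 < q.2} := rfl
    rw [hpre, ag_quadrant_lt hXsupp' hXcdf' hq.1 hq.2.1 hq.2.2.1
      (le_trans hq.2.2.2 (by linarith))]
    rw [← ENNReal.ofReal_mul (Real.exp_pos _).le]
    congr 1
    rw [show -(q.1 + h - q.2 - 1) = (1 - h) + (q.2 - q.1) by ring, Real.exp_add]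
    ring
  rw [hstep, lintegral_const_mul' _ _ ENNReal.ofReal_ne_top,
    ag_core hYsupp' hYcdf' ht.le, ← ENNReal.ofReal_mul (Real.exp_pos _).le]
  congr 1
  rw [show Real.exp (1 - h) = Real.exp 1 / Real.exp h from Real.exp_sub 1 h,
    show Real.exp (t - 1) = Real.exp t / Real.exp 1 from Real.exp_sub t 1,
    show Real.exp (1 - t) = Real.exp 1 / Real.exp t from Real.exp_sub 1 t,
    show Real.exp (-(h - t)) = Real.exp t / Real.exp h by
      rw [show -(h - t) = t - h by ring, Real.exp_sub],
    show Real.exp (-(h + t - 2)) = Real.exp 1 * Real.exp 1 / (Real.exp h * Real.exp t) by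
      rw [show -(h + t - 2) = (1 + 1) - (h + t) by ring, Real.exp_sub, Real.exp_add,
        Real.exp_add]]
  have e1 := Real.exp_ne_zero 1
  have et := Real.exp_ne_zero t
  have eh := Real.exp_ne_zero h
  field_simp
end
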